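/- Three distinct nonzero integer cubes cannot lie in arithmetic progression. -/

import Mathlib

/-- Eisenstein integers: `re + im * ω` where `ω` is a primitive cube root of unity. -/
@[ext]
structure Eis where
  re : ℤ
  im : ℤ
deriving DecidableEq

namespace Eis

instance : Zero Eis := ⟨⟨0, 0⟩⟩
instance : One Eis := ⟨⟨1, 0⟩⟩
instance : Add Eis := ⟨fun a b => ⟨a.re + b.re, a.im + b.im⟩⟩
instance : Neg Eis := ⟨fun a => ⟨-a.re, -a.im⟩⟩
instance : Mul Eis := ⟨fun a b =>
  ⟨a.re * b.re - a.im * b.im, a.re * b.im + a.im * b.re - a.im * b.im⟩⟩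

@[simp] lemma zero_re : (0 : Eis).re = 0 := rfl
@[simp] lemma zero_im : (0 : Eis).im = 0 := rfl
@[simp] lemma one_re : (1 : Eis).re = 1 := rfl
@[simp] lemma one_im : (1 : Eis).im = 0 := rfl
@[simp] lemma add_re (a b : Eis) : (a + b).re = a.re + b.re := rfl
@[simp] lemma add_im (a b : Eis) : (a + b).im = a.im + b.im := rfl
@[simp] lemma neg_re (a : Eis) : (-a).re = -a.re := rfl
@[simp] lemma neg_im (a : Eis) : (-a).im = -a.im := rfl
@[simp] lemma mul_re (a b : Eis) : (a * b).re = a.re * b.re - a.im * b.im := rfl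
@[simp] lemma mul_im (a b : Eis) : (a * b).im = a.re * b.im + a.im * b.re - a.im * b.im := rfl

instance commRing : CommRing Eis where
  add_assoc a b c := by ext <;> simp <;> ring
  zero_add a := by ext <;> simp
  add_zero a := by ext <;> simp
  add_comm a b := by ext <;> simp <;> ring
  neg_add_cancel a := by ext <;> simp
  left_distrib a b c := by ext <;> simp <;> ring
  right_distrib a b c := by ext <;> simp <;> ring
  zero_mul a := by ext <;> simp
  mul_zero a := by ext <;> simp
  mul_assoc a b c := by ext <;> simp <;> ring
  one_mul a := by ext <;> simp
  mul_one a := by ext <;> simp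
  mul_comm a b := by ext <;> simp <;> ring
  nsmul := fun n a => ⟨n * a.re, n * a.im⟩
  nsmul_zero a := by ext <;> simp [HSMul.hSMul, SMul.smul]
  nsmul_succ n a := by ext <;> simp [HSMul.hSMul, SMul.smul] <;> ring
  zsmul := fun n a => ⟨n * a.re, n * a.im⟩
  zsmul_zero' a := by ext <;> simp [HSMul.hSMul, SMul.smul]
  zsmul_succ' n a := by ext <;> push_cast <;> simp [HSMul.hSMul, SMul.smul] <;> ring
  natCast n := ⟨n, 0⟩
  natCast_zero := by ext <;> rfl
  natCast_succ n := by ext <;> simp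
  intCast n := ⟨n, 0⟩
  intCast_ofNat n := by ext <;> rfl
  intCast_negSucc n := by
    refine Eis.ext ?_ ?_
    · show (Int.negSucc n : ℤ) = -((n + 1 : ℕ) : ℤ)
      simp [Int.negSucc_eq]
    · show (0 : ℤ) = -(0 : ℤ)
      simp
  zsmul_neg' n a := by ext <;> simp [Int.negSucc_eq, HSMul.hSMul, SMul.smul] <;> ring

@[simp] lemma sub_re (a b : Eis) : (a - b).re = a.re - b.re := by
  rw [sub_eq_add_neg, sub_eq_add_neg]; rfl
@[simp] lemma sub_im (a b : Eis) : (a - b).im = a.im - b.im := by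
  rw [sub_eq_add_neg, sub_eq_add_neg]; rfl

@[simp] lemma intCast_re (n : ℤ) : (n : Eis).re = n := rfl
@[simp] lemma intCast_im (n : ℤ) : (n : Eis).im = 0 := rfl
@[simp] lemma natCast_re (n : ℕ) : (n : Eis).re = n := rfl
@[simp] lemma natCast_im (n : ℕ) : (n : Eis).im = 0 := rfl
@[simp] lemma ofNat_re (n : ℕ) [n.AtLeastTwo] :
    (no_index (OfNat.ofNat n) : Eis).re = OfNat.ofNat n := rfl
@[simp] lemma ofNat_im (n : ℕ) [n.AtLeastTwo] :
    (no_index (OfNat.ofNat n) : Eis).im = 0 := rfl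

/-- The norm `re² - re·im + im²`. -/
def nrm (a : Eis) : ℤ := a.re ^ 2 - a.re * a.im + a.im ^ 2

lemma nrm_mul (a b : Eis) : nrm (a * b) = nrm a * nrm b := by
  simp [nrm]; ring

lemma nrm_nonneg (a : Eis) : 0 ≤ nrm a := by
  have : 4 * nrm a = (2 * a.re - a.im) ^ 2 + 3 * a.im ^ 2 := by simp [nrm]; ring
  nlinarith [sq_nonneg (2 * a.re - a.im), sq_nonneg a.im]

@[simp] lemma nrm_eq_zero {a : Eis} : nrm a = 0 ↔ a = 0 := by
  constructor
  · intro h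
    have h4 : (2 * a.re - a.im) ^ 2 + 3 * a.im ^ 2 = 0 := by simp [nrm] at h; nlinarith
    have h1 : a.im = 0 := by nlinarith [sq_nonneg (2 * a.re - a.im), sq_nonneg a.im]
    have h2 : a.re = 0 := by nlinarith [sq_nonneg a.re]
    ext <;> simp [h1, h2]
  · rintro rfl; simp [nrm]

@[simp] lemma nrm_zero : nrm 0 = 0 := by simp
@[simp] lemma nrm_one : nrm 1 = 1 := by simp [nrm]
@[simp] lemma nrm_intCast (n : ℤ) : nrm (n : Eis) = n ^ 2 := by simp [nrm]

lemma nrm_pos {a : Eis} (h : a ≠ 0) : 0 < nrm a :=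
  lt_of_le_of_ne (nrm_nonneg a) (fun h' => h (nrm_eq_zero.mp h'.symm))

/-- conjugation -/
def conj (a : Eis) : Eis := ⟨a.re - a.im, -a.im⟩

@[simp] lemma conj_re (a : Eis) : (conj a).re = a.re - a.im := rfl
@[simp] lemma conj_im (a : Eis) : (conj a).im = -a.im := rfl

lemma mul_conj (a : Eis) : a * conj a = (nrm a : Eis) := by
  ext <;> simp [nrm, pow_two] <;> ring

lemma conj_mul (a b : Eis) : conj (a * b) = conj a * conj b := by
  ext <;> simp <;> ring

instance : Nontrivial Eis := ⟨⟨0, 1, by decide⟩⟩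

instance : NoZeroDivisors Eis where
  eq_zero_or_eq_zero_of_mul_eq_zero {a b} h := by
    have h2 : nrm a * nrm b = 0 := by rw [← nrm_mul, h, nrm_zero]
    rcases mul_eq_zero.mp h2 with h' | h'
    · exact Or.inl (nrm_eq_zero.mp h')
    · exact Or.inr (nrm_eq_zero.mp h')

instance : IsDomain Eis := NoZeroDivisors.to_isDomain _

end Eis

namespace Eis

lemma round_div_bound (a n : ℤ) (hn : 0 < n) :
    2 * |a - n * round ((a : ℚ) / (n : ℚ))| ≤ n := by
  have hn' : (0 : ℚ) < (n : ℚ) := by exact_mod_cast hn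
  set r := round ((a : ℚ) / (n : ℚ)) with hr
  have h := abs_sub_round ((a : ℚ) / (n : ℚ))
  have key : |(a : ℚ) - (n : ℚ) * (r : ℚ)| = |(a : ℚ) / (n : ℚ) - (r : ℚ)| * (n : ℚ) := by
    have heq : (a : ℚ) - (n : ℚ) * (r : ℚ) = ((a : ℚ) / (n : ℚ) - (r : ℚ)) * (n : ℚ) := by
      field_simp
    rw [heq, abs_mul, abs_of_pos hn']
  have h2 : |(a : ℚ) - (n : ℚ) * (r : ℚ)| * 2 ≤ (n : ℚ) := by
    rw [key]
    calc |(a : ℚ) / (n : ℚ) - (r : ℚ)| * (n : ℚ) * 2 ≤ (1/2) * (n : ℚ) * 2 := by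
          have := le_of_lt hn'
          nlinarith
      _ = (n : ℚ) := by ring
  have h3 : ((2 * |a - n * r| : ℤ) : ℚ) ≤ ((n : ℤ) : ℚ) := by
    push_cast
    rw [abs_sub_comm] at h2 ⊢
    linarith [h2]
  exact_mod_cast h3

/-- division with rounding -/
def ediv (x y : Eis) : Eis :=
  ⟨round (((x * conj y).re : ℚ) / (nrm y : ℚ)), round (((x * conj y).im : ℚ) / (nrm y : ℚ))⟩

def emod (x y : Eis) : Eis := x - y * ediv x y

lemma emod_add (x y : Eis) : y * ediv x y + emod x y = x := by
  simp [emod]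

lemma nrm_emod_lt (x : Eis) {y : Eis} (hy : y ≠ 0) : nrm (emod x y) < nrm y := by
  have hn : 0 < nrm y := nrm_pos hy
  set n := nrm y with hnd
  set c := x * conj y with hc
  set q := ediv x y with hq
  have e1b := round_div_bound c.re n hn
  have e2b := round_div_bound c.im n hn
  set e1 : ℤ := c.re - n * q.re with he1
  set e2 : ℤ := c.im - n * q.im with he2
  have hq1 : q.re = round ((c.re : ℚ) / (n : ℚ)) := rfl
  have hq2 : q.im = round ((c.im : ℚ) / (n : ℚ)) := rfl
  rw [← hq1] at e1b
  rw [← hq2] at e2b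
  -- key identity : nrm (emod x y) * n = e1^2 - e1*e2 + e2^2
  have key : nrm (emod x y) * n = e1 ^ 2 - e1 * e2 + e2 ^ 2 := by
    have h1 : emod x y * conj y = c - (n : Eis) * q := by
      have hyc : y * conj y = (n : Eis) := mul_conj y
      calc emod x y * conj y = x * conj y - (y * conj y) * ediv x y := by rw [emod]; ring
        _ = c - (n : Eis) * q := by rw [hyc, hc, hq]
    have h2 : nrm (emod x y) * n = nrm (c - (n : Eis) * q) := by
      rw [← h1, nrm_mul]
      have : nrm (conj y) = n := by simp only [nrm, conj_re, conj_im, hnd]; ring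
      rw [this]
    rw [h2, he1, he2]
    simp only [nrm, sub_re, sub_im, mul_re, mul_im, intCast_re, intCast_im]
    ring
  have habs1 : 2 * |e1| ≤ n := e1b
  have habs2 : 2 * |e2| ≤ n := e2b
  have h1 : 4 * e1 ^ 2 ≤ n ^ 2 := by
    have := abs_nonneg e1
    nlinarith [sq_abs e1]
  have h2 : 4 * e2 ^ 2 ≤ n ^ 2 := by
    have := abs_nonneg e2
    nlinarith [sq_abs e2]
  have h3 : 4 * (e1 ^ 2 - e1 * e2 + e2 ^ 2) ≤ 3 * n ^ 2 := by
    nlinarith [sq_nonneg (e1 + e2), sq_nonneg (e1 - e2)]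
  nlinarith [key, hn]

lemma natAbs_nrm_emod_lt (x : Eis) {y : Eis} (hy : y ≠ 0) :
    (nrm (emod x y)).natAbs < (nrm y).natAbs := by
  have h1 := nrm_emod_lt x hy
  have h2 := nrm_nonneg (emod x y)
  have h3 := nrm_nonneg y
  omega

lemma nrm_le_nrm_mul_left (x : Eis) {y : Eis} (hy : y ≠ 0) :
    (nrm x).natAbs ≤ (nrm (x * y)).natAbs := by
  rw [nrm_mul, Int.natAbs_mul]
  have := nrm_pos hy
  have h2 := nrm_nonneg x
  nlinarith [Int.natAbs_of_nonneg h2, Int.natAbs_of_nonneg (le_of_lt this),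
    Nat.le_mul_of_pos_right (nrm x).natAbs (show 0 < (nrm y).natAbs by omega)]

instance : EuclideanDomain Eis :=
  { Eis.commRing, (inferInstance : Nontrivial Eis) with
    quotient := ediv
    remainder := emod
    quotient_zero := fun x => by
      simp [ediv]
      rfl
    quotient_mul_add_remainder_eq := emod_add
    r := fun a b => (nrm a).natAbs < (nrm b).natAbs
    r_wellFounded := (measure (Int.natAbs ∘ nrm)).wf
    remainder_lt := fun x y hy => natAbs_nrm_emod_lt x hy
    mul_left_not_lt := fun a b hb0 => not_lt_of_ge <| nrm_le_nrm_mul_left a hb0 }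

instance : IsPrincipalIdealRing Eis := EuclideanDomain.to_principal_ideal_domain

end Eis

namespace Eis

/-- ω as an element -/
def w : Eis := ⟨0, 1⟩

lemma w_cube : w ^ 3 = 1 := by decide

lemma isUnit_iff_nrm {u : Eis} : IsUnit u ↔ nrm u = 1 := by
  constructor
  · rintro ⟨v, hv⟩
    have h1 : nrm (v : Eis) * nrm (v⁻¹ : Units Eis) = 1 := by
      rw [← nrm_mul]
      simp
    have h2 := nrm_nonneg (v : Eis)
    have h4 := Int.isUnit_iff.mp (IsUnit.of_mul_eq_one _ h1)
    have : nrm (v : Eis) = 1 := by omega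
    rw [← hv]; exact this
  · intro h
    refine IsUnit.of_mul_eq_one (a := u) (conj u) ?_
    rw [mul_conj, h]; rfl

lemma unit_cases {u : Eis} (h : IsUnit u) :
    u = 1 ∨ u = -1 ∨ u = w ∨ u = -w ∨ u = w^2 ∨ u = -w^2 := by
  have h1 : nrm u = 1 := isUnit_iff_nrm.mp h
  obtain ⟨a, b⟩ := u
  simp only [nrm] at h1
  have hb1 : -1 ≤ b := by nlinarith [sq_nonneg (b + 1), sq_nonneg (2*a - b), sq_nonneg b]
  have hb2 : b ≤ 1 := by nlinarith [sq_nonneg (b - 1), sq_nonneg (2*a - b), sq_nonneg b]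
  have hs1 : -2 ≤ 2*a - b := by nlinarith [sq_nonneg (2*a - b + 2), sq_nonneg b]
  have hs2 : 2*a - b ≤ 2 := by nlinarith [sq_nonneg (2*a - b - 2), sq_nonneg b]
  have ha1 : -1 ≤ a := by omega
  have ha2 : a ≤ 1 := by omega
  interval_cases a <;> interval_cases b <;> revert h1 <;> decide

lemma cube_coords (m n : ℤ) :
    (⟨m, n⟩ : Eis) ^ 3 = ⟨m^3 - 3*m*n^2 + n^3, 3*m^2*n - 3*m*n^2⟩ := by
  ext <;> simp [pow_succ, pow_zero] <;> ring

lemma dvd_intCast_iff {k : ℤ} {x : Eis} : (k : Eis) ∣ x ↔ k ∣ x.re ∧ k ∣ x.im := by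
  constructor
  · rintro ⟨c, rfl⟩
    constructor
    · exact ⟨c.re, by simp⟩
    · exact ⟨c.im, by simp⟩
  · rintro ⟨⟨c1, hc1⟩, ⟨c2, hc2⟩⟩
    exact ⟨⟨c1, c2⟩, by ext <;> simp [hc1, hc2]⟩

lemma nrm_dvd_of_dvd {x y : Eis} (h : x ∣ y) : nrm x ∣ nrm y := by
  obtain ⟨c, rfl⟩ := h
  rw [nrm_mul]
  exact Dvd.intro _ rfl

end Eis

namespace Eis

/-- Euler-type structure lemma: a coprime representation `p² + 3q²` which is a cube,
with `p + q` odd, `3 ∣ q`, `3 ∤ p`, comes from cubing in `ℤ[ω]`. -/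
theorem euler_repr {p q c : ℤ} (hcop : IsCoprime p q) (hodd : Odd (p + q))
    (h3q : (3:ℤ) ∣ q) (h3p : ¬ (3:ℤ) ∣ p) (hc : p^2 + 3*q^2 = c^3) :
    ∃ a b : ℤ, p = a*(a-3*b)*(a+3*b) ∧ q = 3*b*(a-b)*(a+b) := by
  classical
  set α : Eis := ⟨p + q, 2*q⟩ with hα
  have hnα : nrm α = c^3 := by
    simp only [hα, nrm]
    rw [← hc]; ring
  have hprod : α * conj α = (c : Eis)^3 := by
    rw [mul_conj, hnα]
    push_cast
    ring
  have hoddc3 : Odd (c^3) := by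
    obtain ⟨k, hk⟩ := hodd
    rw [← hc]
    exact ⟨2*k^2 + 2*k - (2*k+1)*q + 2*q^2, by linear_combination (p - q + 2*k + 1) * hk⟩
  have h2c3 : ¬ (2:ℤ) ∣ c^3 := by
    obtain ⟨k, hk⟩ := hoddc3
    intro h
    omega
  have h2c : ¬ (2:ℤ) ∣ c := fun h => h2c3 (dvd_pow h (by norm_num))
  have h3c : ¬ (3:ℤ) ∣ c := by
    intro h
    apply h3p
    have h33 : (3:ℤ) ∣ c^3 := dvd_pow h (by norm_num)
    have hp2 : (3:ℤ) ∣ p^2 := by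
      obtain ⟨t, ht⟩ := h33
      exact ⟨t - q^2, by rw [← hc] at ht; omega⟩
    exact Int.Prime.dvd_pow' (by norm_num) hp2
  have hα0 : α ≠ 0 := by
    intro h
    have h1 : p + q = 0 := congrArg Eis.re h
    obtain ⟨k, hk⟩ := hodd
    omega
  -- coprimality of α and its conjugate
  have hcε : IsCoprime α (conj α) := by
    by_contra hnc
    have hg : ¬ IsUnit (EuclideanDomain.gcd α (conj α)) := fun h =>
      hnc (EuclideanDomain.gcd_isUnit_iff.mp h)
    have hg0 : EuclideanDomain.gcd α (conj α) ≠ 0 := by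
      intro h
      exact hα0 (EuclideanDomain.gcd_eq_zero_iff.mp h).1
    obtain ⟨π, hirr, hdvd⟩ := WfDvdMonoid.exists_irreducible_factor hg hg0
    have hπ : Prime π := irreducible_iff_prime.mp hirr
    have hπα : π ∣ α := hdvd.trans (EuclideanDomain.gcd_dvd_left _ _)
    have hπᾱ : π ∣ conj α := hdvd.trans (EuclideanDomain.gcd_dvd_right _ _)
    have hnπ : nrm π ∣ c^3 := hnα ▸ nrm_dvd_of_dvd hπα
    have hπnu : ¬ IsUnit π := hπ.not_unit
    have hnπ1 : nrm π ≠ 1 := fun h => hπnu (isUnit_iff_nrm.mpr h)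
    -- π does not divide 2
    have hπ2 : ¬ π ∣ ((2:ℤ) : Eis) := by
      intro h
      have hd4 : nrm π ∣ (2:ℤ)^2 := by
        have := nrm_dvd_of_dvd h
        rwa [nrm_intCast] at this
      have hcop4 : IsCoprime ((2:ℤ)^2) (c^3) :=
        (((Int.prime_two).coprime_iff_not_dvd).mpr h2c).pow
      have := hcop4.isUnit_of_dvd' hd4 hnπ
      rcases Int.isUnit_iff.mp this with h1 | h1
      · exact hnπ1 h1
      · have := nrm_nonneg π; omega
    -- π does not divide σ = ⟨1,2⟩
    have hπσ : ¬ π ∣ (⟨1,2⟩ : Eis) := by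
      intro h
      have hnσ : nrm (⟨1,2⟩ : Eis) = 3 := by norm_num [nrm]
      have hd3 : nrm π ∣ (3:ℤ) := by
        have := nrm_dvd_of_dvd h
        rwa [hnσ] at this
      have hcop3 : IsCoprime ((3:ℤ)) (c^3) :=
        ((Int.prime_three).coprime_iff_not_dvd.mpr h3c).pow_right
      have := hcop3.isUnit_of_dvd' hd3 hnπ
      rcases Int.isUnit_iff.mp this with h1 | h1
      · exact hnπ1 h1
      · have := nrm_nonneg π; omega
    -- π divides (p : Eis)
    have hπp : π ∣ ((p:ℤ) : Eis) := by
      have hsum : α + conj α = ((2:ℤ) : Eis) * ((p:ℤ) : Eis) := by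
        ext <;> simp [hα] <;> ring
      have h2p : π ∣ ((2:ℤ) : Eis) * ((p:ℤ) : Eis) := by
        rw [← hsum]; exact dvd_add hπα hπᾱ
      rcases hπ.2.2 _ _ h2p with h | h
      · exact absurd h hπ2
      · exact h
    -- π divides (q : Eis)
    have hπq : π ∣ ((q:ℤ) : Eis) := by
      have hdiff : α - conj α = ((2:ℤ) : Eis) * (((q:ℤ) : Eis) * (⟨1,2⟩ : Eis)) := by
        ext <;> simp [hα] <;> ring
      have h2q : π ∣ ((2:ℤ) : Eis) * (((q:ℤ) : Eis) * (⟨1,2⟩ : Eis)) := by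
        rw [← hdiff]; exact dvd_sub hπα hπᾱ
      rcases hπ.2.2 _ _ h2q with h | h
      · exact absurd h hπ2
      · rcases hπ.2.2 _ _ h with h' | h'
        · exact h'
        · exact absurd h' hπσ
    -- contradiction via Bezout
    obtain ⟨s, t, hst⟩ := hcop
    have : π ∣ (1 : Eis) := by
      have h1 : ((s:ℤ) : Eis) * ((p:ℤ) : Eis) + ((t:ℤ) : Eis) * ((q:ℤ) : Eis) = 1 := by
        have := congrArg (fun x : ℤ => (x : Eis)) hst
        push_cast at this ⊢
        exact_mod_cast this
      rw [← h1]
      exact dvd_add (Dvd.dvd.mul_left hπp _) (Dvd.dvd.mul_left hπq _)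
    exact hπnu (isUnit_of_dvd_one this)
  -- extract a cube
  obtain ⟨d, hdassoc⟩ := exists_associated_pow_of_mul_eq_pow' hcε hprod
  obtain ⟨u, hu⟩ := hdassoc
  have hd3im : (3:ℤ) ∣ (d^3).im := by
    have hd3 : d^3 = ⟨d.re^3 - 3*d.re*d.im^2 + d.im^3, 3*d.re^2*d.im - 3*d.re*d.im^2⟩ :=
      cube_coords d.re d.im
    rw [hd3]
    exact ⟨d.re^2*d.im - d.re*d.im^2, by ring⟩
  -- rule out the non-real units, obtaining β with β ^ 3 = α
  have hbeta : ∃ β : Eis, β ^ 3 = α := by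
    have hw2 : (w^2 : Eis) = -1 - w := by decide
    rcases unit_cases u.isUnit with h | h | h | h | h | h <;> rw [h] at hu
    · exact ⟨d, by rw [← hu, mul_one]⟩
    · exact ⟨-d, by rw [← hu]; ring⟩
    · exfalso
      have hre := congrArg Eis.re hu
      simp [hα, w] at hre
      omega
    · exfalso
      have hre := congrArg Eis.re hu
      simp [hα, w] at hre
      omega
    · exfalso
      rw [hw2] at hu
      have hre := congrArg Eis.re hu
      have him := congrArg Eis.im hu
      simp [hα, w] at hre him
      omega
    · exfalso
      rw [hw2] at hu
      have hre := congrArg Eis.re hu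
      have him := congrArg Eis.im hu
      simp [hα, w] at hre him
      omega
  obtain ⟨β, hβ3⟩ := hbeta
  -- β has odd norm
  have hoddnβ : ¬ ((2:ℤ) ∣ nrm β) := by
    intro h2
    have h1 : nrm (β^3) = c^3 := by rw [hβ3, hnα]
    have h2' : nrm β ∣ nrm (β^3) := nrm_dvd_of_dvd (dvd_pow_self β (by norm_num))
    exact h2c3 (h2.trans (h1 ▸ h2'))
  -- adjust by a power of ω to make the im-coordinate even
  have hgamma : ∃ γ : Eis, γ ^ 3 = α ∧ (2:ℤ) ∣ γ.im := by
    rcases Int.even_or_odd β.re with hre | hre <;> rcases Int.even_or_odd β.im with him | him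
    · exfalso
      apply hoddnβ
      obtain ⟨k, hk⟩ := hre
      obtain ⟨l, hl⟩ := him
      exact ⟨2*k^2 - 2*k*l + 2*l^2, by simp only [nrm]; rw [hk, hl]; ring⟩
    · -- re even, im odd : use w^2 * β
      refine ⟨w^2 * β, by rw [mul_pow, ← pow_mul, show (w^(2*3) : Eis) = 1 by decide, one_mul, hβ3], ?_⟩
      have : (w^2 * β).im = -β.re := by
        rw [show (w^2 : Eis) = -1 - w by decide]
        simp [w]
      rw [this]
      obtain ⟨k, hk⟩ := hre
      exact ⟨-k, by omega⟩
    · -- re odd, im even : β itself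
      obtain ⟨k, hk⟩ := him
      exact ⟨β, hβ3, ⟨k, by omega⟩⟩
    · -- both odd : use w * β
      refine ⟨w * β, by rw [mul_pow, show (w^3 : Eis) = 1 from w_cube, one_mul, hβ3], ?_⟩
      have : (w * β).im = β.re - β.im := by simp [w]
      rw [this]
      obtain ⟨k, hk⟩ := hre
      obtain ⟨l, hl⟩ := him
      exact ⟨k - l, by omega⟩
  obtain ⟨γ, hγ3, ⟨b, hb⟩⟩ := hgamma
  set a := γ.re - b with hadef
  have hγeq : γ = ⟨a + b, 2*b⟩ := by
    ext <;> simp [hadef] <;> omega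
  rw [hγeq, cube_coords] at hγ3
  have hre := congrArg Eis.re hγ3
  have him := congrArg Eis.im hγ3
  simp only [hα] at hre him
  have hq' : q = 3*b*(a-b)*(a+b) := by
    have h2q : 2*q = 2*(3*b*(a-b)*(a+b)) := by linear_combination -him
    linarith
  exact ⟨a, b, by linear_combination -hre - hq', hq'⟩

end Eis

section Descent

open Eis in
/-- nothing needed from Eis here -/
private lemma cube_inj : Function.Injective (fun a : ℤ => a ^ 3) :=
  (Odd.strictMono_pow (⟨1, by norm_num⟩ : Odd 3)).injective

private lemma mod3_impossible {p q z : ℤ} (hp : ¬(3:ℤ) ∣ p) (hq : ¬(3:ℤ) ∣ q)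
    (h : p * (p^2 + 3*q^2) = z^3) : False := by
  have h9 : (p : ZMod 9) * ((p : ZMod 9)^2 + 3 * (q : ZMod 9)^2) = (z : ZMod 9)^3 := by
    have := congrArg (fun t : ℤ => (t : ZMod 9)) h
    push_cast at this
    exact this
  have hp3 : ((p : ZMod 3)) ≠ 0 := by
    rw [Ne, ZMod.intCast_zmod_eq_zero_iff_dvd]
    exact_mod_cast hp
  have hq3 : ((q : ZMod 3)) ≠ 0 := by
    rw [Ne, ZMod.intCast_zmod_eq_zero_iff_dvd]
    exact_mod_cast hq
  have key : ∀ a b c : ZMod 9,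
      (ZMod.castHom (show (3:ℕ) ∣ 9 by norm_num) (ZMod 3) a ≠ 0) →
      (ZMod.castHom (show (3:ℕ) ∣ 9 by norm_num) (ZMod 3) b ≠ 0) →
      a * (a^2 + 3*b^2) ≠ c^3 := by decide
  refine key (p : ZMod 9) (q : ZMod 9) (z : ZMod 9) ?_ ?_ h9
  · rwa [map_intCast]
  · rwa [map_intCast]

private lemma dvd_of_cube_dvd_two_cube : ∀ n : ℕ, ∀ g z : ℤ, g.natAbs = n →
    g^3 ∣ 2*z^3 → g ∣ z := by
  intro n
  induction n using Nat.strong_induction_on with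
  | _ n IH =>
  intro g z hn hdvd
  rcases eq_or_ne g 0 with rfl | hg0
  · have h0 : (2:ℤ)*z^3 = 0 := by
      simpa using hdvd
    have hz3 : z^3 = 0 := by omega
    have : z = 0 := by
      exact pow_eq_zero_iff (by norm_num) |>.mp hz3
    simp [this]
  rcases Int.even_or_odd g with hev | hodd
  · obtain ⟨h, hh⟩ := hev
    have hgh : g = 2*h := by omega
    have hh0 : h ≠ 0 := by
      intro h0
      apply hg0
      omega
    obtain ⟨t, ht⟩ := hdvd
    -- 2 z^3 = 8 h^3 t, so z^3 = 4 h^3 t, so z even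
    have hz3 : z^3 = 4*h^3*t := by
      rw [hgh] at ht
      have h2 : (2:ℤ) * z^3 = 2 * (4*h^3*t) := by linear_combination ht
      exact mul_left_cancel₀ (by norm_num : (2:ℤ) ≠ 0) h2
    have hzev : Even z := by
      have : Even (z^3) := ⟨2*h^3*t, by rw [hz3]; ring⟩
      exact (Int.even_pow.mp this).1
    obtain ⟨s, hs⟩ := hzev
    have hzs : z = 2*s := by omega
    have hdvd2 : h^3 ∣ 2*s^3 := by
      refine ⟨t, ?_⟩
      have h8 : (8:ℤ)*s^3 = 4*h^3*t := by rw [← hz3, hzs]; ring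
      have h4 : (4:ℤ) * (2*s^3) = 4 * (h^3*t) := by linear_combination h8
      exact mul_left_cancel₀ (by norm_num : (4:ℤ) ≠ 0) h4
    have hlt : h.natAbs < n := by
      rw [← hn]
      have h1 : g.natAbs = 2 * h.natAbs := by
        rw [hgh, Int.natAbs_mul]
        rfl
      have h2 : h.natAbs ≠ 0 := Int.natAbs_ne_zero.mpr hh0
      omega
    have := IH h.natAbs hlt h s rfl hdvd2
    rw [hgh, hzs]
    exact mul_dvd_mul_left 2 this
  · have h2g : ¬ (2:ℤ) ∣ g := by
      obtain ⟨k, hk⟩ := hodd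
      omega
    have hcop : IsCoprime (g^3) (2:ℤ) :=
      (((Int.prime_two).coprime_iff_not_dvd.mpr h2g).symm.pow_left)
    have hdvd3 : g^3 ∣ z^3 := hcop.dvd_of_dvd_mul_left hdvd
    exact (Int.pow_dvd_pow_iff (by norm_num)).mp hdvd3

end Descent

section Main

private lemma odd3 : Odd 3 := ⟨1, by norm_num⟩

private theorem main_descent : ∀ n : ℕ, ∀ x y z : ℤ, z.natAbs = n → z ≠ 0 → x ≠ y →
    x^3 + y^3 ≠ 2*z^3 := by
  intro n
  induction n using Nat.strong_induction_on with
  | _ n IH =>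
  intro x y z hn hz hxy heq
  -- reduce to the coprime case
  have hg0 : (Int.gcd x y : ℤ) ≠ 0 := by
    simp only [Ne, Int.natCast_eq_zero, Int.gcd_eq_zero_iff]
    rintro ⟨rfl, rfl⟩
    exact hxy rfl
  set G : ℤ := (Int.gcd x y : ℤ) with hG
  obtain ⟨x₁, hx1⟩ : G ∣ x := Int.gcd_dvd_left x y
  obtain ⟨y₁, hy1⟩ : G ∣ y := Int.gcd_dvd_right x y
  have hcop1 : IsCoprime x₁ y₁ := by
    have h := Int.gcd_div_gcd_div_gcd (Int.gcd_pos_iff.mpr (by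
      rcases eq_or_ne x 0 with rfl | hx0
      · right
        intro hy0
        exact hxy (hy0 ▸ rfl)
      · left; exact hx0))
    have hx1' : x / G = x₁ := by rw [hx1]; exact Int.mul_ediv_cancel_left _ hg0
    have hy1' : y / G = y₁ := by rw [hy1]; exact Int.mul_ediv_cancel_left _ hg0
    rw [Int.isCoprime_iff_gcd_eq_one, ← hx1', ← hy1']
    exact_mod_cast h
  have heq1 : G^3 * (x₁^3 + y₁^3) = 2*z^3 := by
    rw [hx1, hy1] at heq
    linear_combination heq
  have hGz : G ∣ z := by
    refine dvd_of_cube_dvd_two_cube G.natAbs G z rfl ⟨x₁^3 + y₁^3, ?_⟩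
    linear_combination -heq1
  obtain ⟨z₁, hz1⟩ := hGz
  have hz10 : z₁ ≠ 0 := by
    rintro rfl
    rw [mul_zero] at hz1
    exact hz hz1
  have heq2 : x₁^3 + y₁^3 = 2*z₁^3 := by
    have hG3 : G^3 ≠ 0 := pow_ne_zero _ hg0
    refine mul_left_cancel₀ hG3 ?_
    rw [heq1, hz1]
    ring
  have hxy1 : x₁ ≠ y₁ := by
    rintro rfl
    exact hxy (by rw [hx1, hy1])
  have hz1n : z₁.natAbs ≤ n := by
    rw [← hn, hz1, Int.natAbs_mul]
    have h1 : G.natAbs ≠ 0 := Int.natAbs_ne_zero.mpr hg0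
    exact Nat.le_mul_of_pos_left _ (Nat.pos_of_ne_zero h1)
  -- both x₁ y₁ odd
  have hpar : ¬ (Even x₁ ∧ Even y₁) := by
    rintro ⟨⟨k, hk⟩, ⟨l, hl⟩⟩
    have h2 : IsUnit (2 : ℤ) := hcop1.isUnit_of_dvd' ⟨k, by omega⟩ ⟨l, by omega⟩
    rcases Int.isUnit_iff.mp h2 with h | h <;> omega
  have hsame : (Even x₁ ↔ Even y₁) := by
    have hev : Even (x₁^3 + y₁^3) := ⟨z₁^3, by linarith [heq2]⟩
    constructor
    · intro h
      have h3 : Even (x₁^3) := Int.even_pow.mpr ⟨h, by norm_num⟩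
      have h4 : Even (y₁^3) := (Int.even_add.mp hev).mp h3
      exact (Int.even_pow.mp h4).1
    · intro h
      have h3 : Even (y₁^3) := Int.even_pow.mpr ⟨h, by norm_num⟩
      have h4 : Even (x₁^3) := (Int.even_add.mp hev).mpr h3
      exact (Int.even_pow.mp h4).1
  have hxodd : Odd x₁ := by
    rcases Int.even_or_odd x₁ with h | h
    · exact absurd ⟨h, hsame.mp h⟩ hpar
    · exact h
  have hyodd : Odd y₁ := by
    rcases Int.even_or_odd y₁ with h | h
    · exact absurd ⟨hsame.mpr h, h⟩ hpar
    · exact h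
  -- p and q
  obtain ⟨k, hk⟩ := hxodd
  obtain ⟨l, hl⟩ := hyodd
  obtain ⟨p, hp⟩ : ∃ p, x₁ + y₁ = 2*p := ⟨k + l + 1, by omega⟩
  obtain ⟨q, hq⟩ : ∃ q, x₁ - y₁ = 2*q := ⟨k - l, by omega⟩
  have hx1p : x₁ = p + q := by omega
  have hy1p : y₁ = p - q := by omega
  have hpq : p * (p^2 + 3*q^2) = z₁^3 := by
    rw [hx1p, hy1p] at heq2
    have h2 : (2:ℤ) * (p * (p^2+3*q^2)) = 2 * z₁^3 := by linear_combination heq2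
    exact mul_left_cancel₀ (by norm_num : (2:ℤ) ≠ 0) h2
  have hcoppq : IsCoprime p q := by
    obtain ⟨u, v, huv⟩ := hcop1
    exact ⟨u + v, u - v, by linear_combination huv - u*hx1p - v*hy1p⟩
  have hoddpq : Odd (p + q) := by rw [← hx1p]; exact ⟨k, hk⟩
  have hq0 : q ≠ 0 := by
    rintro rfl
    exact hxy1 (by omega)
  have hp0 : p ≠ 0 := by
    rintro rfl
    rw [zero_mul] at hpq
    exact hz10 (by
      have := pow_eq_zero_iff (n := 3) (by norm_num) |>.mp hpq.symm
      exact this)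
  have hnotboth : ¬ ((3:ℤ) ∣ p ∧ (3:ℤ) ∣ q) := by
    rintro ⟨h1, h2⟩
    have h3 : IsUnit (3:ℤ) := hcoppq.isUnit_of_dvd' h1 h2
    rcases Int.isUnit_iff.mp h3 with h | h <;> norm_num at h
  have hcase : (3:ℤ) ∣ p ∨ (3:ℤ) ∣ q := by
    by_contra hcon
    push_neg at hcon
    exact mod3_impossible hcon.1 hcon.2 hpq
  -- two main cases
  rcases hcase with h3p | h3q
  · -- Case B : 3 ∣ p
    have hq3 : ¬ (3:ℤ) ∣ q := fun h => hnotboth ⟨h3p, h⟩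
    obtain ⟨r, hr⟩ := h3p
    have heqB : (9*r) * (q^2 + 3*r^2) = z₁^3 := by
      linear_combination hpq - (p^2 + 3*p*r + 9*r^2 + 3*q^2)*hr
    have hr0 : r ≠ 0 := by rintro rfl; exact hp0 (by omega)
    have hcopqr : IsCoprime q r := by
      obtain ⟨u, v, huv⟩ := hcoppq
      exact ⟨v, 3*u, by linear_combination huv - u*hr⟩
    have hoddqr : Odd (q + r) := by
      obtain ⟨mm, hmm⟩ := hoddpq
      rw [Int.odd_iff]
      omega
    have h3nqr : ¬ (3:ℤ) ∣ (q^2 + 3*r^2) := by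
      intro h
      have hq2 : (3:ℤ) ∣ q^2 := by omega
      exact hq3 (Int.Prime.dvd_pow' (by norm_num) hq2)
    have hcopB : IsCoprime (9*r) (q^2 + 3*r^2) := by
      have h3X : IsCoprime (3:ℤ) (q^2 + 3*r^2) :=
        (Int.prime_three).coprime_iff_not_dvd.mpr h3nqr
      have hrX : IsCoprime r (q^2 + 3*r^2) := by
        have h1 : IsCoprime r (q*q) := hcopqr.symm.mul_right hcopqr.symm
        have h2 := h1.add_mul_left_right (3*r)
        rwa [show q*q + r*(3*r) = q^2 + 3*r^2 by ring] at h2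
      have := h3X.mul_left (h3X.mul_left hrX)
      rwa [show (3:ℤ)*(3*r) = 9*r by ring] at this
    obtain ⟨⟨A, hA⟩, ⟨C, hC⟩⟩ := Int.eq_pow_of_mul_eq_pow_odd hcopB odd3 heqB
    have h3A : (3:ℤ) ∣ A := by
      have hA3 : (3:ℤ) ∣ A^3 := ⟨3*r, by omega⟩
      exact Int.Prime.dvd_pow' (by norm_num) hA3
    obtain ⟨A', hA'⟩ := h3A
    have hrA : r = 3*A'^3 := by
      have h9 : (9:ℤ)*r = 9*(3*A'^3) := by
        linear_combination hA + (A^2 + 3*A*A' + 9*A'^2)*hA'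
      exact mul_left_cancel₀ (by norm_num : (9:ℤ) ≠ 0) h9
    have h3r : (3:ℤ) ∣ r := ⟨A'^3, hrA⟩
    obtain ⟨a, b, hqa, hra⟩ := Eis.euler_repr hcopqr hoddqr h3r hq3 hC
    have ha0 : a ≠ 0 := by rintro rfl; apply hq0; rw [hqa]; ring
    have hb0 : b ≠ 0 := by rintro rfl; apply hr0; rw [hra]; ring
    have h3a : ¬ (3:ℤ) ∣ a := fun h => hq3 (hqa ▸ Dvd.dvd.mul_right (Dvd.dvd.mul_right h _) _)
    have hodd_amb : Odd (a - b) := by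
      rcases Int.even_or_odd (a - b) with hev | hodd
      · exfalso
        obtain ⟨c1, hc1⟩ := hev
        have hdvd_q : (a - 3*b) ∣ q := ⟨a*(a+3*b), by rw [hqa]; ring⟩
        have hdvd_r : (a - b) ∣ r := ⟨3*b*(a+b), by rw [hra]; ring⟩
        obtain ⟨c2, hc2⟩ := hdvd_q
        obtain ⟨c3, hc3⟩ := hdvd_r
        obtain ⟨mm, hmm⟩ := hoddqr
        obtain ⟨c4, hc4⟩ : ∃ c4, a - 3*b = 2*c4 := ⟨c1 - b, by omega⟩
        have hqe : q = 2*(c4*c2) := by rw [hc2, hc4]; ring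
        have hre : r = 2*(c1*c3) := by rw [hc3, hc1]; ring
        omega
      · exact hodd
    have hab : IsCoprime a b := by
      obtain ⟨u, v, huv⟩ := hcopqr
      exact ⟨u*((a-3*b)*(a+3*b)), v*(3*(a-b)*(a+b)),
        by linear_combination huv - u*hqa - v*hra⟩
    have hcop_amb_b : IsCoprime (a - b) b := by
      have h2 := hab.add_mul_left_left (-1)
      rwa [show a + b*(-1) = a - b by ring] at h2
    have hcop_apb_b : IsCoprime (a + b) b := by
      have h2 := hab.add_mul_left_left 1
      rwa [show a + b*1 = a + b by ring] at h2
    have hcop_amb_2 : IsCoprime (a - b) (2:ℤ) := by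
      refine ((Int.prime_two).coprime_iff_not_dvd.mpr ?_).symm
      obtain ⟨mm, hmm⟩ := hodd_amb
      omega
    have hcop_amb_apb : IsCoprime (a - b) (a + b) := by
      have h1 : IsCoprime (a - b) (2*b) := hcop_amb_2.mul_right hcop_amb_b
      have h2 := h1.add_mul_left_right 1
      rwa [show 2*b + (a - b)*1 = a + b by ring] at h2
    have hsplitB : b * ((a-b)*(a+b)) = A'^3 := by
      have h3' : (3:ℤ) * (b * ((a-b)*(a+b))) = 3 * (A'^3) := by
        linear_combination hrA - hra
      exact mul_left_cancel₀ (by norm_num : (3:ℤ) ≠ 0) h3'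
    obtain ⟨⟨e, he⟩, ⟨m2, hm2⟩⟩ := Int.eq_pow_of_mul_eq_pow_odd
      (hcop_amb_b.symm.mul_right hcop_apb_b.symm) odd3 hsplitB
    obtain ⟨⟨f, hf⟩, ⟨g, hg⟩⟩ := Int.eq_pow_of_mul_eq_pow_odd hcop_amb_apb odd3 hm2
    have hnew : (-f)^3 + g^3 = 2*e^3 := by linear_combination hf - hg + 2*he
    have he0 : e ≠ 0 := by
      rintro rfl
      rw [zero_pow (by norm_num)] at he
      exact hb0 he
    have hfg : (-f) ≠ g := by
      intro h
      have h2 : g^3 = -(f^3) := by rw [← h]; ring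
      exact ha0 (by linarith [hf, hg, h2])
    have hf0 : f ≠ 0 := by
      rintro rfl
      rw [zero_pow (by norm_num)] at hf
      apply hr0
      rw [hra, hf]
      ring
    have hg0' : g ≠ 0 := by
      rintro rfl
      rw [zero_pow (by norm_num)] at hg
      apply hr0
      rw [hra, hg]
      ring
    have hC0 : C ≠ 0 := by
      rintro rfl
      rw [zero_pow (by norm_num)] at hC
      have hq2 : 0 < q^2 := by positivity
      have hr2 : 0 ≤ r^2 := sq_nonneg r
      omega
    have hA'e : A' = e*f*g := by
      apply cube_inj
      show A'^3 = (e*f*g)^3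
      rw [← hsplitB, hf, hg, he]
      ring
    have hz1f : z₁ = 3*(e*f*g)*C := by
      apply cube_inj
      show z₁^3 = (3*(e*f*g)*C)^3
      rw [← heqB, hC, hrA, hA'e]
      ring
    have hlt : e.natAbs < n := by
      have h1 : z₁.natAbs = 3 * (e.natAbs * f.natAbs * g.natAbs) * C.natAbs := by
        rw [hz1f, Int.natAbs_mul, Int.natAbs_mul, Int.natAbs_mul, Int.natAbs_mul]
        rfl
      have he1 : 1 ≤ e.natAbs := Nat.one_le_iff_ne_zero.mpr (Int.natAbs_ne_zero.mpr he0)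
      have hf1 : 1 ≤ f.natAbs := Nat.one_le_iff_ne_zero.mpr (Int.natAbs_ne_zero.mpr hf0)
      have hg1 : 1 ≤ g.natAbs := Nat.one_le_iff_ne_zero.mpr (Int.natAbs_ne_zero.mpr hg0')
      have hC1 : 1 ≤ C.natAbs := Nat.one_le_iff_ne_zero.mpr (Int.natAbs_ne_zero.mpr hC0)
      have key : e.natAbs * 2 ≤ 3 * (e.natAbs * f.natAbs * g.natAbs) * C.natAbs := by
        calc e.natAbs * 2 ≤ e.natAbs * 3 := by omega
          _ = 3 * (e.natAbs * 1 * 1) * 1 := by ring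
          _ ≤ 3 * (e.natAbs * f.natAbs * g.natAbs) * C.natAbs := by
              exact Nat.mul_le_mul (Nat.mul_le_mul (le_refl 3)
                (Nat.mul_le_mul (Nat.mul_le_mul (le_refl _) hf1) hg1)) hC1
      omega
    exact IH e.natAbs hlt (-f) g e rfl he0 hfg hnew
  · -- Case A : 3 ∣ q
    have hp3 : ¬ (3:ℤ) ∣ p := fun h => hnotboth ⟨h, h3q⟩
    have hcp3 : IsCoprime p (3:ℤ) := ((Int.prime_three).coprime_iff_not_dvd.mpr hp3).symm
    have hcopPQ : IsCoprime p (p^2 + 3*q^2) := by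
      have h1 : IsCoprime p (3*(q*q)) := hcp3.mul_right (hcoppq.mul_right hcoppq)
      have h2 := h1.add_mul_left_right p
      rwa [show 3*(q*q) + p*p = p^2 + 3*q^2 by ring] at h2
    obtain ⟨⟨P, hP⟩, ⟨C, hC⟩⟩ := Int.eq_pow_of_mul_eq_pow_odd hcopPQ odd3 hpq
    obtain ⟨a, b, hpa, hqa⟩ := Eis.euler_repr hcoppq hoddpq h3q hp3 hC
    have ha0 : a ≠ 0 := by rintro rfl; apply hp0; rw [hpa]; ring
    have hb0 : b ≠ 0 := by rintro rfl; apply hq0; rw [hqa]; ring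
    have h3a : ¬ (3:ℤ) ∣ a := fun h => hp3 (hpa ▸ Dvd.dvd.mul_right (Dvd.dvd.mul_right h _) _)
    have hdvd_amb_p : (a - 3*b) ∣ p := ⟨a*(a+3*b), by rw [hpa]; ring⟩
    have hdvd_amb_q : (a - b) ∣ q := ⟨3*b*(a+b), by rw [hqa]; ring⟩
    have hodd_amb : Odd (a - 3*b) := by
      rcases Int.even_or_odd (a - 3*b) with hev | hodd
      · exfalso
        obtain ⟨c1, hc1⟩ := hev
        obtain ⟨c2, hc2⟩ := hdvd_amb_p
        obtain ⟨c3, hc3⟩ := hdvd_amb_q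
        obtain ⟨m, hm⟩ := hoddpq
        -- a - b is even too
        obtain ⟨c4, hc4⟩ : ∃ c4, a - b = 2*c4 := ⟨c1 + b, by omega⟩
        have hpe : p = 2*(c1*c2) := by rw [hc2, hc1]; ring
        have hqe : q = 2*(c4*c3) := by rw [hc3, hc4]; ring
        omega
      · exact hodd
    have h3amb : ¬ (3:ℤ) ∣ (a - 3*b) := by
      intro hd
      exact h3a (by omega)
    -- coprimality of the three factors
    have hab : IsCoprime a b := by
      obtain ⟨u, v, huv⟩ := hcoppq
      exact ⟨u*((a-3*b)*(a+3*b)), v*(3*(a-b)*(a+b)),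
        by linear_combination huv - u*hpa - v*hqa⟩
    have hca3 : IsCoprime a (3:ℤ) := ((Int.prime_three).coprime_iff_not_dvd.mpr h3a).symm
    have hcop_a_amb : IsCoprime a (a - 3*b) := by
      have h1 : IsCoprime a (3*b) := hca3.mul_right hab
      have h2 := h1.neg_right.add_mul_left_right 1
      rwa [show -(3*b) + a*1 = a - 3*b by ring] at h2
    have hcop_a_apb : IsCoprime a (a + 3*b) := by
      have h1 : IsCoprime a (3*b) := hca3.mul_right hab
      have h2 := h1.add_mul_left_right 1
      rwa [show 3*b + a*1 = a + 3*b by ring] at h2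
    have hcop_amb_b : IsCoprime (a - 3*b) b := by
      have h2 := hab.add_mul_left_left (-3)
      rwa [show a + b*(-3) = a - 3*b by ring] at h2
    have hcop_amb_2 : IsCoprime (a - 3*b) (2:ℤ) := by
      refine ((Int.prime_two).coprime_iff_not_dvd.mpr ?_).symm
      obtain ⟨m, hm⟩ := hodd_amb
      omega
    have hcop_amb_3 : IsCoprime (a - 3*b) (3:ℤ) :=
      ((Int.prime_three).coprime_iff_not_dvd.mpr h3amb).symm
    have hcop_amb_apb : IsCoprime (a - 3*b) (a + 3*b) := by
      have h1 : IsCoprime (a - 3*b) (2*(3*b)) :=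
        hcop_amb_2.mul_right (hcop_amb_3.mul_right hcop_amb_b)
      have h2 := h1.add_mul_left_right 1
      rwa [show 2*(3*b) + (a - 3*b)*1 = a + 3*b by ring] at h2
    -- split the cube p = P^3
    have hsplit1 : a * ((a-3*b)*(a+3*b)) = P^3 := by linear_combination hP - hpa
    obtain ⟨⟨e, he⟩, ⟨m, hm⟩⟩ := Int.eq_pow_of_mul_eq_pow_odd
      (hcop_a_amb.mul_right hcop_a_apb) odd3 hsplit1
    obtain ⟨⟨f, hf⟩, ⟨g, hg⟩⟩ := Int.eq_pow_of_mul_eq_pow_odd hcop_amb_apb odd3 hm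
    -- new solution
    have hnew : f^3 + g^3 = 2*e^3 := by linear_combination 2*he - hf - hg
    have he0 : e ≠ 0 := by
      rintro rfl
      rw [zero_pow (by norm_num)] at he
      exact ha0 he
    have hfg : f ≠ g := by
      rintro rfl
      rw [← hg] at hf
      exact hb0 (by omega)
    -- size decrease
    have hzfact : z₁ = e*f*g*C := by
      apply cube_inj
      show z₁^3 = (e*f*g*C)^3
      rw [← hpq, hC, hpa, hf, hg, he]
      ring
    have hf0 : f ≠ 0 := by
      rintro rfl
      rw [zero_pow (by norm_num)] at hf
      apply hp0
      rw [hpa, hf]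
      ring
    have hg0' : g ≠ 0 := by
      rintro rfl
      rw [zero_pow (by norm_num)] at hg
      apply hp0
      rw [hpa, hg]
      ring
    have hC2 : 2 ≤ C.natAbs := by
      have hp2 : 0 < p^2 := by positivity
      have hq2 : 0 < q^2 := by positivity
      have hC4 : 4 ≤ C^3 := by omega
      have hCpos : 0 < C := by
        by_contra hcon
        push_neg at hcon
        have : C^3 ≤ 0 := Odd.pow_nonpos odd3 hcon
        omega
      have hC2' : 2 ≤ C := by
        by_contra hcon
        push_neg at hcon
        have hC1 : C = 1 := by omega
        rw [hC1] at hC4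
        norm_num at hC4
      omega
    have hlt : e.natAbs < n := by
      have h1 : z₁.natAbs = e.natAbs * f.natAbs * g.natAbs * C.natAbs := by
        rw [hzfact, Int.natAbs_mul, Int.natAbs_mul, Int.natAbs_mul]
      have he1 : 1 ≤ e.natAbs := Nat.one_le_iff_ne_zero.mpr (Int.natAbs_ne_zero.mpr he0)
      have hf1 : 1 ≤ f.natAbs := Nat.one_le_iff_ne_zero.mpr (Int.natAbs_ne_zero.mpr hf0)
      have hg1 : 1 ≤ g.natAbs := Nat.one_le_iff_ne_zero.mpr (Int.natAbs_ne_zero.mpr hg0')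
      have key : e.natAbs * 2 ≤ e.natAbs * f.natAbs * g.natAbs * C.natAbs := by
        calc e.natAbs * 2 = e.natAbs * 1 * 1 * 2 := by ring
          _ ≤ e.natAbs * f.natAbs * g.natAbs * C.natAbs :=
            Nat.mul_le_mul (Nat.mul_le_mul (Nat.mul_le_mul (le_refl _) hf1) hg1) hC2
      omega
    exact IH e.natAbs hlt f g e rfl he0 hfg hnew

end Main

theorem no_three_cubes_in_AP (x y z : ℤ)
    (hx : x ^ 3 ≠ 0) (hy : y ^ 3 ≠ 0) (hz : z ^ 3 ≠ 0)
    (hxz : x ^ 3 ≠ z ^ 3) (hyz : y ^ 3 ≠ z ^ 3) (hxy : x ^ 3 ≠ y ^ 3) :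
    x ^ 3 + y ^ 3 ≠ 2 * z ^ 3 := by
  intro heq
  have hz0 : z ≠ 0 := fun h => hz (by rw [h]; ring)
  have hxy' : x ≠ y := fun h => hxy (by rw [h])
  exact main_descent z.natAbs x y z rfl hz0 hxy' heq
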